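/- arXiv:1105.4179 — 2 statements merged into one kernel-verified Lean document; each statement's English description precedes it below -/
import Mathlib

section
/- Let f : ℝ → ℝ be continuously differentiable with compact support and let x ∈ ℝ. Then ∫_ℝ ln|x − y| · f'(y) dy = lim_{ε→0⁺} ∫_{|x − y| ≥ ε} f(y)/(x − y) dy. That is, the Hilbert transform of the second form (with the real logarithmic kernel ln|x − y|) equals the principal-value Hilbert integral of f, with no principal value needed on the logarithmic side. -/
open MeasureTheory Filter Topology Set Real

/-! Integrating by parts on the half-lines `y ≤ x - ε` and `y ≥ x + ε`, with `log |x - y|` as an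
antiderivative of `(y - x)⁻¹`, gives
`∫_{|x-y| ≥ ε} f y / (x - y) = (f (x + ε) - f (x - ε)) * log ε + ∫_{|x-y| ≥ ε} log |x - y| * f' y`.
Since `f` is differentiable at `x`, the boundary term is `O(ε log ε) → 0`; since `log |x - ·|` is
locally integrable, `log |x - ·| * f'` is integrable and the last integral tends to the full one
by dominated convergence. -/

theorem locallyIntegrable_of_forall_intervalIntegrable {E : Type*} [NormedAddCommGroup E]
    {f : ℝ → E} (hf : ∀ a b, IntervalIntegrable f volume a b) : LocallyIntegrable f := by
  refine locallyIntegrable_iff.2 fun K hK => ?_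
  have hKab : K ⊆ uIcc (sInf K) (sSup K) :=
    (subset_Icc_csInf_csSup hK.bddBelow hK.bddAbove).trans Icc_subset_uIcc
  exact ((intervalIntegrable_iff' (f := f)).1 (hf _ _)).mono_set hKab

theorem integrable_log_abs_sub_mul {g : ℝ → ℝ} (hg : Continuous g) (hgc : HasCompactSupport g)
    (x : ℝ) : Integrable fun y => log |x - y| * g y := by
  have hlog : LocallyIntegrable fun y => log |x - y| :=
    locallyIntegrable_of_forall_intervalIntegrable fun a b => by
      simpa only [log_abs, sub_sub_cancel] using
        (intervalIntegral.intervalIntegrable_log' (a := x - a) (b := x - b)).comp_sub_left x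
  simpa only [smul_eq_mul] using hlog.integrable_smul_right_of_hasCompactSupport hg hgc

theorem ContinuousOn.integrableOn_of_forall_notMem_eq_zero {X E : Type*} [TopologicalSpace X]
    [MeasurableSpace X] [OpensMeasurableSpace X] [T2Space X] [NormedAddCommGroup E]
    {μ : Measure X} [IsFiniteMeasureOnCompacts μ] {h : X → E} {s K : Set X}
    (hh : ContinuousOn h s) (hs : IsClosed s) (hK : IsCompact K)
    (h0 : ∀ y ∈ s, y ∉ K → h y = 0) : IntegrableOn h s μ :=
  ((hh.mono inter_subset_left).integrableOn_compact (hK.inter_left hs)).of_forall_sdiff_eq_zero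
    hs.measurableSet fun y hy => h0 y hy.1 fun hyK => hy.2 ⟨hy.1, hyK⟩

theorem hasDerivAt_log_abs_sub {x y : ℝ} (hy : y ≠ x) :
    HasDerivAt (fun t => log |x - t|) (y - x)⁻¹ y := by
  simp only [log_abs]
  convert ((hasDerivAt_id' y).const_sub x).log (sub_ne_zero.2 hy.symm) using 1
  rw [← neg_sub, inv_neg, neg_div, one_div]

theorem tendsto_sub_mul_log_nhdsGT_zero {f : ℝ → ℝ} {x f' : ℝ} (hf : HasDerivAt f f' x) :
    Tendsto (fun ε => (f (x + ε) - f (x - ε)) * log ε) (𝓝[>] 0) (𝓝 0) := by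
  have hsym : HasDerivAt (fun t => f (x + t) - f (x - t)) (f' - -f') 0 :=
    (HasDerivAt.comp_const_add x 0 (by rwa [add_zero])).sub
      (HasDerivAt.comp_const_sub x 0 (by rwa [sub_zero]))
  have hslope := hsym.tendsto_slope_zero_right
  have hmullog : Tendsto (fun ε : ℝ => ε * log ε) (𝓝[>] 0) (𝓝 0) := by
    simpa using continuous_mul_log.continuousAt.tendsto.mono_left (nhdsWithin_le_nhds (a := 0))
  have hprod := hslope.mul hmullog
  simp only [zero_add, add_zero, sub_zero, sub_self, smul_eq_mul, mul_zero] at hprod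
  refine hprod.congr' ?_
  filter_upwards [self_mem_nhdsWithin] with ε (hε : 0 < ε)
  field_simp

theorem measurableSet_le_abs_sub (x ε : ℝ) : MeasurableSet {y : ℝ | ε ≤ |x - y|} :=
  measurableSet_le measurable_const (measurable_const.sub measurable_id).abs

theorem tendsto_setIntegral_le_abs_sub {E : Type*} [NormedAddCommGroup E] [NormedSpace ℝ E]
    {g : ℝ → E} (hg : Integrable g) (x : ℝ) :
    Tendsto (fun ε => ∫ y in {y : ℝ | ε ≤ |x - y|}, g y) (𝓝[>] 0) (𝓝 (∫ y, g y)) := by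
  simp_rw [← integral_indicator (measurableSet_le_abs_sub x _)]
  refine tendsto_integral_filter_of_dominated_convergence (fun y => ‖g y‖)
    (Eventually.of_forall fun ε => hg.aestronglyMeasurable.indicator (measurableSet_le_abs_sub x ε))
    (Eventually.of_forall fun ε => ae_of_all _ fun y => norm_indicator_le_norm_self g y) hg.norm ?_
  filter_upwards [compl_mem_ae_iff.2 (measure_singleton x)] with y (hy : y ≠ x)
  refine tendsto_const_nhds.congr' ?_
  filter_upwards [Ioo_mem_nhdsGT (abs_pos.2 (sub_ne_zero.2 hy.symm))] with ε hε
  exact (indicator_of_mem (show y ∈ {y : ℝ | ε ≤ |x - y|} from hε.2.le) g).symm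

theorem setIntegral_le_abs_sub_eq {E : Type*} [NormedAddCommGroup E] [NormedSpace ℝ E]
    {g : ℝ → E} {x ε : ℝ} (hε : 0 < ε) (hg₁ : IntegrableOn g (Iic (x - ε)))
    (hg₂ : IntegrableOn g (Ioi (x + ε))) :
    ∫ y in {y : ℝ | ε ≤ |x - y|}, g y = (∫ y in Iic (x - ε), g y) + ∫ y in Ioi (x + ε), g y := by
  have hset : {y : ℝ | ε ≤ |x - y|} = Iic (x - ε) ∪ Ici (x + ε) := by
    ext y
    simp only [mem_ofPred_eq, mem_union, mem_Iic, mem_Ici, le_abs]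
    constructor <;> rintro (h | h) <;> [left; right; left; right] <;> linarith
  rw [hset, setIntegral_union (Iic_disjoint_Ici.2 (by linarith)) measurableSet_Ici hg₁
    ((integrableOn_Ici_iff_integrableOn_Ioi).2 hg₂), integral_Ici_eq_integral_Ioi]

theorem div_sub_eq_neg_inv_sub_mul (a x y : ℝ) : a / (x - y) = -((y - x)⁻¹ * a) := by
  rw [← neg_sub, div_neg, div_eq_inv_mul]

theorem integrableOn_inv_sub_mul {f : ℝ → ℝ} (hf : Continuous f) (hfc : HasCompactSupport f)
    {x : ℝ} {s : Set ℝ} (hs : IsClosed s) (hxs : x ∉ s) :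
    IntegrableOn (fun y => (y - x)⁻¹ * f y) s := by
  have hcont : ContinuousOn (fun y => (y - x)⁻¹ * f y) s :=
    (ContinuousOn.inv₀ (f := fun y => y - x) (by fun_prop)
      fun y hy => sub_ne_zero.2 fun h => hxs (h ▸ hy)).mul hf.continuousOn
  exact hcont.integrableOn_of_forall_notMem_eq_zero hs hfc
    fun y _ hy => by rw [image_eq_zero_of_notMem_tsupport hy, mul_zero]

section IntegrationByParts

variable {f : ℝ → ℝ} (hf : ContDiff ℝ 1 f) (hfc : HasCompactSupport f) {x a : ℝ}
include hf hfc

theorem integral_Ioi_div_sub_eq (hxa : x < a) :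
    ∫ y in Ioi a, f y / (x - y) = f a * log (a - x) + ∫ y in Ioi a, log |x - y| * deriv f y := by
  have hibp := integral_Ioi_mul_deriv_eq_deriv_mul (u := fun y => log |x - y|) (v := f)
    (u' := fun y => (y - x)⁻¹) (b' := 0)
    (fun y (hy : a < y) => hasDerivAt_log_abs_sub (hxa.trans hy).ne')
    (fun y _ => (hf.differentiable one_ne_zero y).hasDerivAt)
    (integrable_log_abs_sub_mul (hf.continuous_deriv le_rfl) hfc.deriv x).integrableOn
    ((integrableOn_inv_sub_mul hf.continuous hfc isClosed_Ici (notMem_Ici.2 hxa)).mono_set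
      Ioi_subset_Ici_self)
    ((hasDerivAt_log_abs_sub hxa.ne').continuousAt.mul hf.continuous.continuousAt
      |>.tendsto.mono_left nhdsWithin_le_nhds)
    (hfc.mul_left.is_zero_at_infty.mono_left atTop_le_cocompact)
  simp only [div_sub_eq_neg_inv_sub_mul, integral_neg]
  rw [hibp, Pi.mul_apply, abs_sub_comm, abs_of_pos (sub_pos.2 hxa)]
  ring

theorem integral_Iic_div_sub_eq (hax : a < x) :
    ∫ y in Iic a, f y / (x - y) = -(f a * log (x - a)) + ∫ y in Iic a, log |x - y| * deriv f y := by
  have hibp := integral_Iic_mul_deriv_eq_deriv_mul (u := fun y => log |x - y|) (v := f)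
    (u' := fun y => (y - x)⁻¹) (b' := 0)
    (fun y (hy : y < a) => hasDerivAt_log_abs_sub (hy.trans hax).ne)
    (fun y _ => (hf.differentiable one_ne_zero y).hasDerivAt)
    (integrable_log_abs_sub_mul (hf.continuous_deriv le_rfl) hfc.deriv x).integrableOn
    (integrableOn_inv_sub_mul hf.continuous hfc isClosed_Iic (notMem_Iic.2 hax))
    ((hasDerivAt_log_abs_sub hax.ne).continuousAt.mul hf.continuous.continuousAt
      |>.tendsto.mono_left nhdsWithin_le_nhds)
    (hfc.mul_left.is_zero_at_infty.mono_left atBot_le_cocompact)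
  simp only [div_sub_eq_neg_inv_sub_mul, integral_neg]
  rw [hibp, Pi.mul_apply, abs_of_pos (sub_pos.2 hax)]
  ring

theorem setIntegral_le_abs_sub_div_sub_eq {ε : ℝ} (hε : 0 < ε) :
    ∫ y in {y : ℝ | ε ≤ |x - y|}, f y / (x - y)
      = (f (x + ε) - f (x - ε)) * log ε
        + ∫ y in {y : ℝ | ε ≤ |x - y|}, log |x - y| * deriv f y := by
  have hdiv {s : Set ℝ} (hs : IsClosed s) (hxs : x ∉ s) :
      IntegrableOn (fun y => f y / (x - y)) s := by
    simp only [div_sub_eq_neg_inv_sub_mul]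
    exact (integrableOn_inv_sub_mul hf.continuous hfc hs hxs).neg
  have hlog := integrable_log_abs_sub_mul (hf.continuous_deriv le_rfl) hfc.deriv x
  rw [setIntegral_le_abs_sub_eq hε hlog.integrableOn hlog.integrableOn,
    setIntegral_le_abs_sub_eq hε (hdiv isClosed_Iic (by simpa using hε))
      ((hdiv isClosed_Ici (by simpa using hε)).mono_set Ioi_subset_Ici_self),
    integral_Iic_div_sub_eq hf hfc (by linarith), integral_Ioi_div_sub_eq hf hfc (by linarith),
    sub_sub_cancel, add_sub_cancel_left]
  ring

end IntegrationByParts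

/-- **Hilbert transform of the second form (real logarithmic kernel).**
For `f` continuously differentiable with compact support,
`∫_ℝ ln|x − y| f'(y) dy` equals the principal-value Hilbert integral
`lim_{ε→0⁺} ∫_{|x − y| ≥ ε} f(y)/(x − y) dy`. -/
theorem log_kernel_eq_pv_hilbert
    (f : ℝ → ℝ) (hf : ContDiff ℝ 1 f) (hfc : HasCompactSupport f) (x : ℝ) :
    Tendsto (fun ε : ℝ => ∫ y in {y : ℝ | ε ≤ |x - y|}, f y / (x - y))
      (𝓝[>] 0) (𝓝 (∫ y : ℝ, Real.log |x - y| * deriv f y)) := by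
  have hbdry := tendsto_sub_mul_log_nhdsGT_zero ((hf.differentiable one_ne_zero x).hasDerivAt)
  have htail := tendsto_setIntegral_le_abs_sub
    (integrable_log_abs_sub_mul (hf.continuous_deriv le_rfl) hfc.deriv x) x
  have hlim := hbdry.add htail
  rw [zero_add] at hlim
  refine hlim.congr' ?_
  filter_upwards [self_mem_nhdsWithin] with ε hε
  exact (setIntegral_le_abs_sub_div_sub_eq hf hfc hε).symm
end

section
/- Let z ∈ ℂ, R > 0, and let f : ℂ → ℂ be complex differentiable on an open set containing the closed disc {w : |w − z| ≤ R}. Then, with log denoting the principal branch of the complex logarithm, −(1/(2πi)) ∮_{|w − z| = R} log(z − w) · f'(w) dw = f(z) − f(z + R), where the contour is the circle of radius R about z traversed once counterclockwise. -/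
/-!
On the circle `w = z + R e^{iθ}`, `θ ∈ (0, 2π]`, the principal branch gives
`log (z - w) = log R + i (θ - π)`, so the contour integral is
`∫₀^{2π} (log R + i (θ - π)) (d/dθ) f(w(θ)) dθ`. Integrating by parts, the boundary terms at
`θ = 2π` and `θ = 0` both see the point `w = z + R`, but with logarithms differing by the jump
`2πi`, and contribute `2πi f(z + R)`; the remaining term is `-i ∫₀^{2π} f(w(θ)) dθ = -2πi f(z)`
by the mean value property.
-/

open Complex Metric Set intervalIntegral
open scoped Real

theorem Complex.log_center_sub_circleMap (c : ℂ) {R : ℝ} (hR : 0 < R) {θ : ℝ}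
    (hθ : θ ∈ Ioc 0 (2 * π)) :
    log (c - circleMap c R θ) = Real.log R + (θ - π) * I := by
  have hexp : c - circleMap c R θ = exp (Real.log R + (θ - π) * I) := by
    rw [exp_add, ← ofReal_exp, Real.exp_log hR, sub_mul, exp_sub, exp_pi_mul_I, circleMap]
    ring
  rw [hexp, log_exp] <;> simp <;> linarith [hθ.1, hθ.2]

variable {E : Type*} [NormedAddCommGroup E] [NormedSpace ℂ E] [CompleteSpace E]

theorem DiffContOnCl.integral_circleMap_eq_two_pi_smul {f : ℂ → E} {c : ℂ} {R : ℝ}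
    (hf : DiffContOnCl ℂ f (ball c |R|)) :
    ∫ θ in 0..2 * π, f (circleMap c R θ) = (2 * π) • f c := by
  rw [← inv_smul_eq_iff₀ Real.two_pi_pos.ne', ← Real.circleAverage_def]
  exact hf.circleAverage

theorem circleIntegral_log_center_sub_smul_deriv {f : ℂ → E} {c : ℂ} {R : ℝ}
    (hR : 0 < R) (hf : AnalyticOnNhd ℂ f (closedBall c R)) :
    (∮ w in C(c, R), log (c - w) • deriv f w) = (2 * π * I) • (f (c + R) - f c) := by
  set h' : ℝ → E := fun θ ↦ (circleMap 0 R θ * I) • deriv f (circleMap c R θ)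
  have hmem : ∀ θ, circleMap c R θ ∈ closedBall c R := circleMap_mem_closedBall c hR.le
  have hderiv : ∀ θ, HasDerivAt (f ∘ circleMap c R) (h' θ) θ := fun θ ↦
    (hf _ (hmem θ)).differentiableAt.hasDerivAt.scomp θ (hasDerivAt_circleMap c R θ)
  have hcont : Continuous h' :=
    ((continuous_circleMap 0 R).mul continuous_const).smul
      (hf.deriv.continuousOn.comp_continuous (continuous_circleMap c R) hmem)
  have hmean : ∫ θ in 0..2 * π, f (circleMap c R θ) = (2 * π) • f c := by
    refine DiffContOnCl.integral_circleMap_eq_two_pi_smul ?_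
    rw [abs_of_pos hR]
    exact hf.differentiableOn.diffContOnCl_ball subset_rfl
  have hstart : circleMap c R 0 = c + R := by simp [circleMap]
  have hend : circleMap c R (2 * π) = c + R := by rw [(periodic_circleMap c R).eq, hstart]
  -- `uIoc 0 (2 * π)` omits `θ = 0`, where `c - w = -R` sits on the branch cut
  have hkernel : ∀ θ ∈ uIoc 0 (2 * π), deriv (circleMap c R) θ • (log (c - circleMap c R θ) •
      deriv f (circleMap c R θ)) = (Real.log R + (θ - π) * I : ℂ) • h' θ := fun θ hθ ↦ by
    rw [uIoc_of_le Real.two_pi_pos.le] at hθ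
    rw [log_center_sub_circleMap c hR hθ, deriv_circleMap, smul_comm]
  calc (∮ w in C(c, R), log (c - w) • deriv f w)
      = ∫ θ in 0..2 * π, (Real.log R + (θ - π) * I : ℂ) • h' θ :=
        integral_congr_ae (.of_forall hkernel)
    _ = (Real.log R + π * I : ℂ) • f (c + R) - (Real.log R - π * I : ℂ) • f (c + R)
          - ∫ θ in 0..2 * π, I • f (circleMap c R θ) := by
        rw [integral_smul_deriv_eq_deriv_smul (u' := fun _ ↦ I) (fun θ _ ↦ ?_)
          (fun θ _ ↦ hderiv θ) intervalIntegrable_const (hcont.intervalIntegrable _ _)]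
        · rw [Function.comp_apply, Function.comp_apply, hend, hstart]
          congr 3 <;> push_cast <;> ring
        · simpa using
            (((hasDerivAt_id (θ : ℂ)).comp_ofReal.sub_const (π : ℂ)).mul_const I).const_add
              (Real.log R : ℂ)
    _ = (2 * π * I) • (f (c + R) - f c) := by
      rw [intervalIntegral.integral_smul, hmean, smul_sub, smul_comm I, ← sub_smul,
        ← smul_assoc, real_smul]
      push_cast
      congr 2
      ring

/-- **Line integral with a logarithmic kernel (paper's Lemma 2.6, precise form).**
If `f` is complex differentiable on an open set containing the closed disc of radius `R`
about `z`, then, with `log` the principal branch of the complex logarithm,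
`−(1/(2πi)) ∮_{|w−z|=R} log(z − w) f'(w) dw = f(z) − f(z + R)`,
the circle being traversed once counterclockwise. -/
theorem log_kernel_contour_integral
    (z : ℂ) (R : ℝ) (hR : 0 < R) (f : ℂ → ℂ) (U : Set ℂ) (hU : IsOpen U)
    (hsub : closedBall z R ⊆ U) (hf : DifferentiableOn ℂ f U) :
    -(1 / (2 * Real.pi * Complex.I)) *
        (∮ w in C(z, R), Complex.log (z - w) * deriv f w)
      = f z - f (z + R) := by
  have key := circleIntegral_log_center_sub_smul_deriv hR ((hf.analyticOnNhd hU).mono hsub)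
  simp only [smul_eq_mul] at key
  rw [key]
  field_simp
  ring
end
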